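/- arXiv:1905.10691 — 3 statements merged into one kernel-verified Lean document; each statement's English description precedes it below -/
import Mathlib

section
/- Let n, k ∈ ℕ, let F : (Fin n → ℝ) → (Fin n → ℝ) be a map, V : (Fin n → ℝ) → ℝ a nonnegative function, ε ≥ 0 a constant, A a k × n real matrix, b ∈ ℝᵏ, and λ : ℝⁿ → ℝ, μ : Fin k → ℝⁿ → ℝ functions. Suppose that for all x ∈ ℝⁿ: (1) V(x) − V(F(x)) + λ(x)·(V(x) − ε) ≥ 0; (2) for every i ∈ Fin k, (b_i − (A x)_i) + μ_i(x)·(V(x) − ε) ≥ 0; and (3) λ(x) ≥ 0 and μ_i(x) ≥ 0 for all i. Then for every x₀ with V(x₀) ≤ ε and every t ∈ ℕ, the iterate x_t = F^[t](x₀) satisfies A x_t ≤ b componentwise; that is, the policy is safe from every initial state in the sublevel set G_ε = {x : V(x) ≤ ε}. -/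
/-- **Safety from the LQR-verification feasibility constraints (Theorem 2).**
Under the multiplier constraints, every trajectory starting in the sublevel set
`{x | V x ≤ ε}` stays inside the polytope `{x | A x ≤ b}`. -/
theorem safe_of_lqr_verification {n k : ℕ}
    (F : (Fin n → ℝ) → (Fin n → ℝ)) (V : (Fin n → ℝ) → ℝ) (ε : ℝ)
    (A : Matrix (Fin k) (Fin n) ℝ) (b : Fin k → ℝ)
    (lam : (Fin n → ℝ) → ℝ) (mu : Fin k → (Fin n → ℝ) → ℝ)
    (hV : ∀ x, 0 ≤ V x) (hε : 0 ≤ ε)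
    (h1 : ∀ x, 0 ≤ V x - V (F x) + lam x * (V x - ε))
    (h2 : ∀ x, ∀ i : Fin k, 0 ≤ (b i - A.mulVec x i) + mu i x * (V x - ε))
    (h3 : ∀ x, 0 ≤ lam x)
    (h4 : ∀ x, ∀ i : Fin k, 0 ≤ mu i x) :
    ∀ x₀, V x₀ ≤ ε → ∀ t : ℕ, ∀ i : Fin k, A.mulVec (F^[t] x₀) i ≤ b i := by
  intro x₀ hx₀ t
  have hinv : ∀ s : ℕ, V (F^[s] x₀) ≤ ε := by
    intro s
    induction s with
    | zero => simpa using hx₀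
    | succ s ih =>
      rw [Function.iterate_succ_apply']
      set x := F^[s] x₀
      have hlam := mul_nonpos_of_nonneg_of_nonpos (h3 x) (by linarith : V x - ε ≤ 0)
      have := h1 x
      linarith
  intro i
  have hx := hinv t
  set x := F^[t] x₀
  have hmu := mul_nonpos_of_nonneg_of_nonpos (h4 x i) (by linarith : V x - ε ≤ 0)
  have := h2 x i
  linarith
end

section
/- Consider a discrete-time system with state space X (an arbitrary type) and a safe set Safe ⊆ X. Let Θ be a set of LQR targets with a target map ρ : X → Θ. For each target θ ∈ Θ, let L θ : X → X be the closed-loop LQR dynamics and G θ ⊆ X a region satisfying: (inv) for all θ and all x ∈ G θ, L θ x ∈ G θ, and (safe) G θ ⊆ Safe for all θ. Let R : X → X be the closed-loop recovery dynamics, F̂ : X → X the closed-loop learned dynamics, and fix a horizon T ∈ ℕ. Define the shield dynamics S : X × Θ → X × Θ by: S(x, θ) = (F̂(x), ρ(F̂(x))) if F̂(x) is recoverable; otherwise S(x, θ) = (L θ x, θ) if x ∈ G θ; otherwise S(x, θ) = (R(x), ρ(R(x))). Suppose x₀ ∈ X is recoverable, and for t ∈ ℕ let (x_t, θ_t) =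 S^[t](x₀, ρ(x₀)). Then for every t ∈ ℕ, either (x_t is recoverable and θ_t = ρ(x_t)) or x_t ∈ G θ_t. -/
/-- A state `x` is recoverable (with horizon `T`): the recovery dynamics `R`
reach, within `T` steps and without leaving `Safe`, a state that lies in the
verified region of its own LQR target. -/
def Recoverable {X Θ : Type*} (Safe : Set X) (ρ : X → Θ)
    (G : Θ → Set X) (R : X → X) (T : ℕ) (x : X) : Prop :=
  ∃ t' < T, (∀ s ≤ t', R^[s] x ∈ Safe) ∧ R^[t'] x ∈ G (ρ (R^[t'] x))

open Classical in
/-- The shield dynamics on augmented states `(x, θ)`: use the learned dynamics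
`F̂` if its successor is recoverable; else the LQR dynamics `L θ` if `x ∈ G θ`
(keeping the target fixed); else the recovery dynamics `R`. -/
noncomputable def shieldStep {X Θ : Type*} (Safe : Set X) (ρ : X → Θ)
    (L : Θ → X → X) (G : Θ → Set X) (R : X → X) (Fhat : X → X) (T : ℕ)
    (p : X × Θ) : X × Θ :=
  if Recoverable Safe ρ G R T (Fhat p.1) then (Fhat p.1, ρ (Fhat p.1))
  else if p.1 ∈ G p.2 then (L p.2 p.1, p.2)
  else (R p.1, ρ (R p.1))

lemma recoverable_step {X Θ : Type*} (Safe : Set X) (ρ : X → Θ)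
    (G : Θ → Set X) (R : X → X) (T : ℕ) (x : X)
    (h : Recoverable Safe ρ G R T x) (hx : x ∉ G (ρ x)) :
    Recoverable Safe ρ G R T (R x) := by
  obtain ⟨t', ht', hsafe, hG⟩ := h
  cases t' with
  | zero => simp at hG; exact absurd hG hx
  | succ n =>
    refine ⟨n, by omega, fun s hs => ?_, ?_⟩
    · rw [← Function.iterate_succ_apply]
      exact hsafe (s + 1) (by omega)
    · rw [← Function.iterate_succ_apply]
      exact hG

/-- **Shield invariant (key lemma for Theorem 3).** Starting from a recoverable
state `x₀` with stored target `ρ x₀`, at every time `t` the augmented state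
`(x_t, θ_t)` of the shield dynamics satisfies: either `x_t` is recoverable and
`θ_t = ρ x_t`, or `x_t ∈ G θ_t`. -/
theorem shield_invariant {X Θ : Type*} (Safe : Set X) (ρ : X → Θ)
    (L : Θ → X → X) (G : Θ → Set X) (R : X → X) (Fhat : X → X) (T : ℕ)
    (hinv : ∀ θ, ∀ x ∈ G θ, L θ x ∈ G θ)
    (hsafe : ∀ θ, G θ ⊆ Safe)
    (x₀ : X) (h₀ : Recoverable Safe ρ G R T x₀) :
    ∀ t : ℕ,
      (Recoverable Safe ρ G R T
          ((shieldStep Safe ρ L G R Fhat T)^[t] (x₀, ρ x₀)).1 ∧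
        ((shieldStep Safe ρ L G R Fhat T)^[t] (x₀, ρ x₀)).2 =
          ρ ((shieldStep Safe ρ L G R Fhat T)^[t] (x₀, ρ x₀)).1) ∨
      ((shieldStep Safe ρ L G R Fhat T)^[t] (x₀, ρ x₀)).1 ∈
        G ((shieldStep Safe ρ L G R Fhat T)^[t] (x₀, ρ x₀)).2 := by
  intro t
  induction t with
  | zero => exact Or.inl ⟨h₀, rfl⟩
  | succ n ih =>
    rw [Function.iterate_succ_apply']
    set p := (shieldStep Safe ρ L G R Fhat T)^[n] (x₀, ρ x₀) with hp
    unfold shieldStep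
    by_cases h1 : Recoverable Safe ρ G R T (Fhat p.1)
    · simp [h1]
    · by_cases h2 : p.1 ∈ G p.2
      · rw [if_neg h1, if_pos h2]
        exact Or.inr (hinv p.2 p.1 h2)
      · rw [if_neg h1, if_neg h2]
        rcases ih with ⟨hr, hθ⟩ | hG
        · exact Or.inl ⟨recoverable_step Safe ρ G R T p.1 hr (hθ ▸ h2), rfl⟩
        · exact absurd hG h2
end

section
/- Consider a discrete-time system with state space X (an arbitrary type) and a safe set Safe ⊆ X. Let Θ be a set of LQR targets with a target map ρ : X → Θ. For each target θ ∈ Θ, let L θ : X → X be the closed-loop LQR dynamics and G θ ⊆ X a region satisfying: (inv) for all θ and all x ∈ G θ, L θ x ∈ G θ, and (safe) G θ ⊆ Safe for all θ. Let R : X → X be the closed-loop recovery dynamics, F̂ : X → X the closed-loop learned dynamics, and fix a horizon T ∈ ℕ. Define the shield dynamics S : X × Θ → X × Θ by: S(x, θ) = (F̂(x), ρ(F̂(x))) if F̂(x) is recoverable; otherwise S(x, θ) = (L θ x, θ) if x ∈ G θ; otherwise S(x, θ) = (R(x), ρ(R(x))). If x₀ ∈ X is recoverable, then the shield policy is safe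 starting from x₀: for every t ∈ ℕ, the first component of S^[t](x₀, ρ(x₀)) lies in Safe. -/
/-- **Safety of the shield (Theorem 3).** If `x₀` is recoverable, then the
trajectory of the shield dynamics from `(x₀, ρ x₀)` remains in `Safe`. -/
theorem shield_safe {X Θ : Type*} (Safe : Set X) (ρ : X → Θ)
    (L : Θ → X → X) (G : Θ → Set X) (R : X → X) (Fhat : X → X) (T : ℕ)
    (hinv : ∀ θ, ∀ x ∈ G θ, L θ x ∈ G θ)
    (hsafe : ∀ θ, G θ ⊆ Safe)
    (x₀ : X) (h₀ : Recoverable Safe ρ G R T x₀) :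
    ∀ t : ℕ, ((shieldStep Safe ρ L G R Fhat T)^[t] (x₀, ρ x₀)).1 ∈ Safe := by
  set S := shieldStep Safe ρ L G R Fhat T with hS
  -- invariant
  have key : ∀ t, (S^[t] (x₀, ρ x₀)).1 ∈ G (S^[t] (x₀, ρ x₀)).2 ∨
      ((S^[t] (x₀, ρ x₀)).2 = ρ (S^[t] (x₀, ρ x₀)).1 ∧
        Recoverable Safe ρ G R T (S^[t] (x₀, ρ x₀)).1) := by
    intro t
    induction t with
    | zero => exact Or.inr ⟨rfl, h₀⟩
    | succ n ih =>
      simp only [Function.iterate_succ_apply']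
      set p := S^[n] (x₀, ρ x₀) with hp
      simp only [hS, shieldStep]
      by_cases h1 : Recoverable Safe ρ G R T (Fhat p.1)
      · simp only [h1, if_true]; exact Or.inr ⟨trivial, trivial⟩
      · simp only [h1, if_false]
        by_cases h2 : p.1 ∈ G p.2
        · simp only [h2, if_true]; exact Or.inl (hinv _ _ h2)
        · simp only [h2, if_false]
          rcases ih with h | ⟨hθ, t', ht', hsafe', hG⟩
          · exact absurd h h2
          · right
            refine ⟨trivial, ?_⟩
            rcases Nat.eq_zero_or_pos t' with rfl | hpos
            · exact absurd (hθ ▸ hG) h2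
            · obtain ⟨t'', rfl⟩ := Nat.exists_eq_succ_of_ne_zero hpos.ne'
              refine ⟨t'', lt_of_le_of_lt (Nat.le_succ _) ht', ?_, ?_⟩
              · intro s hs
                have := hsafe' (s + 1) (Nat.succ_le_succ hs)
                rwa [Function.iterate_succ_apply] at this
              · rwa [Function.iterate_succ_apply] at hG
  intro t
  rcases key t with h | ⟨_, _, _, hsafe', _⟩
  · exact hsafe _ h
  · simpa using hsafe' 0 (Nat.zero_le _)
end
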